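/- Let G be a short combinatorial game (in normal play) that is not equal to an integer, and define integers λ̄(G) := max over Left options G^L of (ρ̄(G^L) + 1) and ρ̄(G) := min over Right options G^R of (λ̄(G^R) − 1), where λ̄(H) = ρ̄(H) = n whenever H equals an integer n. Then for every integer n with λ̄(G) ≤ n, every Left option G^L satisfies G^L ⧏ n (G^L is less than or fuzzy to n). -/

import Mathlib

/-! Combinatorial game theory (`SetTheory.PGame`, `SetTheory.Game`) has been removed from
Mathlib; the notions used below are re-declared here with their old meaning. -/
namespace SetTheory

universe u

noncomputable section

/-- Pre-games (as in the former `Mathlib.SetTheory.Game.PGame`). -/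
inductive PGame : Type (u + 1)
  | mk : ∀ α β : Type u, (α → PGame) → (β → PGame) → PGame

namespace PGame

/-- The indexing type for allowable moves by Left. -/
def LeftMoves : PGame.{u} → Type u
  | mk l _ _ _ => l

/-- The indexing type for allowable moves by Right. -/
def RightMoves : PGame.{u} → Type u
  | mk _ r _ _ => r

/-- The new game after Left makes an allowed move. -/
def moveLeft : ∀ g : PGame.{u}, LeftMoves g → PGame.{u}
  | mk _l _ L _ => L

/-- The new game after Right makes an allowed move. -/
def moveRight : ∀ g : PGame.{u}, RightMoves g → PGame.{u}
  | mk _ _r _ R => R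

/-- The pair `(x ≤ y, x ⧏ y)`, defined by simultaneous recursion. -/
def leLF (x : PGame.{u}) : PGame.{u} → Prop × Prop :=
  PGame.rec (motive := fun _ => PGame.{u} → Prop × Prop)
    (fun _ _ _ _ IHL IHR y =>
      PGame.rec (motive := fun _ => Prop × Prop)
        (fun yl yr yL yR JL JR =>
          ((∀ i, (IHL i (mk yl yr yL yR)).2) ∧ (∀ j, (JR j).2),
            (∃ i, (JL i).1) ∨ (∃ j, (IHR j (mk yl yr yL yR)).1))) y) x

instance : LE PGame.{u} := ⟨fun x y => (leLF x y).1⟩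

theorem leLF_mk {xl xr yl yr : Type u} (xL : xl → PGame.{u}) (xR : xr → PGame.{u})
    (yL : yl → PGame.{u}) (yR : yr → PGame.{u}) :
    leLF (mk xl xr xL xR) (mk yl yr yL yR) =
      ((∀ i, (leLF (xL i) (mk yl yr yL yR)).2) ∧ (∀ j, (leLF (mk xl xr xL xR) (yR j)).2),
        (∃ i, (leLF (mk xl xr xL xR) (yL i)).1) ∨ (∃ j, (leLF (xR j) (mk yl yr yL yR)).1)) :=
  rfl

theorem leLF_snd_iff (x : PGame.{u}) : ∀ y : PGame.{u},
    ((leLF x y).2 ↔ ¬(leLF y x).1) ∧ ((leLF y x).2 ↔ ¬(leLF x y).1) := by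
  induction x with
  | mk xl xr xL xR IHxl IHxr =>
    intro y
    induction y with
    | mk yl yr yL yR IHyl IHyr =>
      have h1 : ∀ i, (leLF (yL i) (mk xl xr xL xR)).2 ↔ ¬(leLF (mk xl xr xL xR) (yL i)).1 :=
        fun i => (IHyl i).2
      have h2 : ∀ j, (leLF (mk yl yr yL yR) (xR j)).2 ↔ ¬(leLF (xR j) (mk yl yr yL yR)).1 :=
        fun j => (IHxr j _).2
      have h3 : ∀ i, (leLF (xL i) (mk yl yr yL yR)).2 ↔ ¬(leLF (mk yl yr yL yR) (xL i)).1 :=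
        fun i => (IHxl i _).1
      have h4 : ∀ j, (leLF (mk xl xr xL xR) (yR j)).2 ↔ ¬(leLF (yR j) (mk xl xr xL xR)).1 :=
        fun j => (IHyr j).1
      rw [leLF_mk, leLF_mk]
      dsimp only
      simp only [h1, h2, h3, h4, not_and_or, not_forall, not_not]
      refine ⟨?_, ?_⟩ <;> trivial

theorem le_iff_moves (x y : PGame.{u}) :
    x ≤ y ↔ (∀ i, ¬ y ≤ x.moveLeft i) ∧ (∀ j, ¬ y.moveRight j ≤ x) := by
  cases x with
  | mk xl xr xL xR =>
    cases y with
    | mk yl yr yL yR =>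
      show (leLF _ _).1 ↔ _
      rw [leLF_mk]
      exact and_congr (forall_congr' fun i => (leLF_snd_iff _ _).1)
        (forall_congr' fun j => (leLF_snd_iff _ _).1)

theorem pg_le_refl (x : PGame.{u}) : x ≤ x := by
  induction x with
  | mk xl xr xL xR IHl IHr =>
    rw [le_iff_moves]
    exact ⟨fun i h => ((le_iff_moves _ _).1 h).1 i (IHl i),
      fun j h => ((le_iff_moves _ _).1 h).2 j (IHr j)⟩

theorem pg_le_trans_aux {x y z : PGame.{u}}
    (h₁ : ∀ {i}, y ≤ z → z ≤ x.moveLeft i → y ≤ x.moveLeft i)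
    (h₂ : ∀ {j}, z.moveRight j ≤ x → x ≤ y → z.moveRight j ≤ y) (hxy : x ≤ y) (hyz : y ≤ z) :
    x ≤ z :=
  (le_iff_moves x z).2 ⟨fun i h => ((le_iff_moves x y).1 hxy).1 i (h₁ hyz h),
    fun j h => ((le_iff_moves y z).1 hyz).2 j (h₂ h hxy)⟩

theorem pg_le_trans3 (x : PGame.{u}) : ∀ y z : PGame.{u},
    (x ≤ y → y ≤ z → x ≤ z) ∧ (y ≤ z → z ≤ x → y ≤ x) ∧ (z ≤ x → x ≤ y → z ≤ y) := by
  induction x with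
  | mk xl xr xL xR IHxl IHxr =>
    intro y
    induction y with
    | mk yl yr yL yR IHyl IHyr =>
      intro z
      induction z with
      | mk zl zr zL zR IHzl IHzr =>
        exact ⟨pg_le_trans_aux (fun {i} => (IHxl i _ _).2.1) fun {j} => (IHzr j).2.2,
          pg_le_trans_aux (fun {i} => (IHyl i _).2.2) fun {j} => (IHxr j _ _).1,
          pg_le_trans_aux (fun {i} => (IHzl i).1) fun {j} => (IHyr j _).2.1⟩

theorem pg_le_trans {x y z : PGame.{u}} (h₁ : x ≤ y) (h₂ : y ≤ z) : x ≤ z :=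
  (pg_le_trans3 x y z).1 h₁ h₂

/-- Two pre-games are equivalent if `x ≤ y` and `y ≤ x`. -/
def Equiv (x y : PGame.{u}) : Prop := x ≤ y ∧ y ≤ x

instance setoid : Setoid PGame.{u} :=
  ⟨Equiv, ⟨fun x => ⟨pg_le_refl x, pg_le_refl x⟩, fun h => ⟨h.2, h.1⟩,
    fun h₁ h₂ => ⟨pg_le_trans h₁.1 h₂.1, pg_le_trans h₂.2 h₁.2⟩⟩⟩

/-- The pre-game `0`. -/
instance : Zero PGame.{u} := ⟨mk PEmpty PEmpty PEmpty.elim PEmpty.elim⟩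

/-- The pre-game `1`. -/
instance : One PGame.{u} := ⟨mk PUnit PEmpty (fun _ => 0) PEmpty.elim⟩

/-- The negation of a pre-game. -/
def neg (x : PGame.{u}) : PGame.{u} :=
  PGame.rec (motive := fun _ => PGame.{u})
    (fun xl xr _ _ IHL IHR => mk xr xl IHR IHL) x

instance : Neg PGame.{u} := ⟨neg⟩

/-- The sum of two pre-games. -/
def add (x y : PGame.{u}) : PGame.{u} :=
  PGame.rec (motive := fun _ => PGame.{u} → PGame.{u})
    (fun xl xr _ _ IHxl IHxr y =>
      PGame.rec (motive := fun _ => PGame.{u})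
        (fun yl yr yL yR IHyl IHyr =>
          mk (xl ⊕ yl) (xr ⊕ yr) (Sum.elim (fun i => IHxl i (mk yl yr yL yR)) IHyl)
            (Sum.elim (fun i => IHxr i (mk yl yr yL yR)) IHyr)) y) x y

instance : Add PGame.{u} := ⟨add⟩

instance : Sub PGame.{u} := ⟨fun x y => x + -y⟩

theorem add_congr_right_aux (z : PGame.{u}) : ∀ x y : PGame.{u},
    (x ≤ y → x + z ≤ y + z) ∧ (¬ y ≤ x → ¬ y + z ≤ x + z) := by
  induction z with
  | mk zl zr zL zR IHzl IHzr =>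
    intro x
    induction x with
    | mk xl xr xL xR IHxl IHxr =>
      intro y
      induction y with
      | mk yl yr yL yR IHyl IHyr =>
        constructor
        · intro h0
          have h := (le_iff_moves _ _).1 h0
          rw [le_iff_moves]
          constructor
          · rintro (i | k)
            · exact (IHxl i _).2 (h.1 i)
            · intro h'
              exact ((le_iff_moves _ _).1 h').1 (Sum.inr k) ((IHzl k _ _).1 h0)
          · rintro (j | k)
            · exact (IHyr j).2 (h.2 j)
            · intro h'
              exact ((le_iff_moves _ _).1 h').2 (Sum.inr k) ((IHzr k _ _).1 h0)
        · intro h h'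
          rw [le_iff_moves] at h h'
          simp only [not_and_or, not_forall, not_not] at h
          rcases h with ⟨i, hi⟩ | ⟨j, hj⟩
          · exact h'.1 (Sum.inl i) ((IHyl i).1 hi)
          · exact h'.2 (Sum.inl j) ((IHxr j _).1 hj)

theorem add_congr_left_aux (z : PGame.{u}) : ∀ x y : PGame.{u},
    (x ≤ y → z + x ≤ z + y) ∧ (¬ y ≤ x → ¬ z + y ≤ z + x) := by
  induction z with
  | mk zl zr zL zR IHzl IHzr =>
    intro x
    induction x with
    | mk xl xr xL xR IHxl IHxr =>
      intro y
      induction y with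
      | mk yl yr yL yR IHyl IHyr =>
        constructor
        · intro h0
          have h := (le_iff_moves _ _).1 h0
          rw [le_iff_moves]
          constructor
          · rintro (k | i)
            · intro h'
              exact ((le_iff_moves _ _).1 h').1 (Sum.inl k) ((IHzl k _ _).1 h0)
            · exact (IHxl i _).2 (h.1 i)
          · rintro (k | j)
            · intro h'
              exact ((le_iff_moves _ _).1 h').2 (Sum.inl k) ((IHzr k _ _).1 h0)
            · exact (IHyr j).2 (h.2 j)
        · intro h h'
          rw [le_iff_moves] at h h'
          simp only [not_and_or, not_forall, not_not] at h
          rcases h with ⟨i, hi⟩ | ⟨j, hj⟩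
          · exact h'.1 (Sum.inr i) ((IHyl i).1 hi)
          · exact h'.2 (Sum.inr j) ((IHxr j _).1 hj)

theorem neg_le_neg_aux (x : PGame.{u}) : ∀ y : PGame.{u},
    (x ≤ y ↔ -y ≤ -x) ∧ (y ≤ x ↔ -x ≤ -y) := by
  induction x with
  | mk xl xr xL xR IHxl IHxr =>
    intro y
    induction y with
    | mk yl yr yL yR IHyl IHyr =>
      constructor
      · rw [le_iff_moves, le_iff_moves (-_)]
        exact ⟨fun h => ⟨fun j hj => h.2 j ((IHyr j).2.2 hj),
            fun i hi => h.1 i ((IHxl i _).2.2 hi)⟩,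
          fun h => ⟨fun i hi => h.2 i ((IHxl i _).2.1 hi),
            fun j hj => h.1 j ((IHyr j).2.1 hj)⟩⟩
      · rw [le_iff_moves, le_iff_moves (-_)]
        exact ⟨fun h => ⟨fun j hj => h.2 j ((IHxr j _).1.2 hj),
            fun i hi => h.1 i ((IHyl i).1.2 hi)⟩,
          fun h => ⟨fun i hi => h.2 i ((IHyl i).1.1 hi),
            fun j hj => h.1 j ((IHxr j _).1.1 hj)⟩⟩

/-- A short game: finitely many options, hereditarily. -/
class inductive Short : PGame.{u} → Type (u + 1)
  | mk : ∀ {α β : Type u} {L : α → PGame.{u}} {R : β → PGame.{u}} (_ : ∀ i : α, Short (L i))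
      (_ : ∀ j : β, Short (R j)) [Fintype α] [Fintype β], Short ⟨α, β, L, R⟩

/-- The pre-game `powHalf n` is `1 / 2 ^ n`. -/
def powHalf : ℕ → PGame.{u}
  | 0 => 1
  | n + 1 => ⟨PUnit, PUnit, fun _ => 0, fun _ => powHalf n⟩

end PGame

/-- Games: pre-games up to equivalence. -/
abbrev Game := Quotient PGame.setoid.{u}

namespace Game

instance : LE Game.{u} :=
  ⟨Quotient.lift₂ (fun x y : PGame.{u} => x ≤ y) fun _ _ _ _ hx hy =>
    propext ⟨fun h => PGame.pg_le_trans hx.2 (PGame.pg_le_trans h hy.1),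
      fun h => PGame.pg_le_trans hx.1 (PGame.pg_le_trans h hy.2)⟩⟩

instance : Zero Game.{u} := ⟨⟦0⟧⟩

instance : One Game.{u} := ⟨⟦1⟧⟩

instance : Add Game.{u} :=
  ⟨Quotient.lift₂ (fun x y : PGame.{u} => (⟦x + y⟧ : Game.{u})) fun _ _ _ _ hx hy =>
    Quotient.sound
      ⟨PGame.pg_le_trans ((PGame.add_congr_right_aux _ _ _).1 hx.1)
          ((PGame.add_congr_left_aux _ _ _).1 hy.1),
        PGame.pg_le_trans ((PGame.add_congr_right_aux _ _ _).1 hx.2)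
          ((PGame.add_congr_left_aux _ _ _).1 hy.2)⟩⟩

instance : Neg Game.{u} :=
  ⟨Quotient.lift (fun x : PGame.{u} => (⟦-x⟧ : Game.{u})) fun _ _ h =>
    Quotient.sound ⟨(PGame.neg_le_neg_aux _ _).1.1 h.2, (PGame.neg_le_neg_aux _ _).1.1 h.1⟩⟩

/-- Integer multiples, as in the former `AddCommGroup Game` instance (`zsmul := zsmulRec`). -/
instance : SMul ℤ Game.{u} := ⟨zsmulRec⟩

end Game

end

end SetTheory

open SetTheory PGame Classical

noncomputable section

namespace Temper

universe u

/-- `q` is a dyadic rational. -/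
def IsDyadic (q : ℚ) : Prop := ∃ (k : ℤ) (m : ℕ), q = (k : ℚ) / 2 ^ m

/-- Maximum of a set of rationals (junk value if none). -/
def qSup (s : Set ℚ) : ℚ := if h : ∃ a, IsGreatest s a then h.choose else 0

/-- Minimum of a set of rationals (junk value if none). -/
def qInf (s : Set ℚ) : ℚ := if h : ∃ a, IsLeast s a then h.choose else 0

/-- Maximum of a set of integers (junk value if none). -/
def zSup (s : Set ℤ) : ℤ := if h : ∃ a, IsGreatest s a then h.choose else 0

/-- Minimum of a set of integers (junk value if none). -/
def zInf (s : Set ℤ) : ℤ := if h : ∃ a, IsLeast s a then h.choose else 0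

/-- `n`-fold sum of a pregame. -/
def nsmulP : ℕ → PGame.{u} → PGame.{u}
  | 0, _ => 0
  | n + 1, x => nsmulP n x + x

/-- `k`-fold sum of a pregame, for an integer `k`. -/
def zsmulP (k : ℤ) (x : PGame.{u}) : PGame.{u} :=
  if 0 ≤ k then nsmulP k.toNat x else -(nsmulP (-k).toNat x)

/-- A pregame representing the dyadic rational `q` (junk if `q` is not dyadic). -/
def dPGame (q : ℚ) : PGame.{u} := zsmulP q.num (PGame.powHalf (Nat.log 2 q.den))

/-- The game value of the dyadic rational `q`. -/
def dGame (q : ℚ) : Game.{u} := q.num • (⟦PGame.powHalf (Nat.log 2 q.den)⟧ : Game)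

/-- The (value of the) pregame `G` is equal to an integer. -/
def EqInt (G : PGame.{u}) : Prop := ∃ n : ℤ, (⟦G⟧ : Game) = n • (1 : Game)

/-- The (value of the) pregame `G` is equal to a (dyadic rational) number. -/
def EqNum (G : PGame.{u}) : Prop := ∃ q : ℚ, IsDyadic q ∧ (⟦G⟧ : Game) = dGame q

/-- The pair `(λ̄(G), ρ̄(G))`. -/
def lrBar : PGame.{u} → ℤ × ℤ
  | PGame.mk α β L R =>
    if h : EqInt (PGame.mk α β L R) then (h.choose, h.choose)
    else (zSup (Set.range fun i : α => (lrBar (L i)).2 + 1),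
          zInf (Set.range fun j : β => (lrBar (R j)).1 - 1))

/-- `λ̄(G)`. -/
def lBar (G : PGame.{u}) : ℤ := (lrBar G).1

/-- `ρ̄(G)`. -/
def rBar (G : PGame.{u}) : ℤ := (lrBar G).2

/-- Left and Right stops of a pregame. -/
def stops : PGame.{u} → ℚ × ℚ
  | PGame.mk α β L R =>
    if h : EqNum (PGame.mk α β L R) then (h.choose, h.choose)
    else (qSup (Set.range fun i : α => (stops (L i)).2),
          qInf (Set.range fun j : β => (stops (R j)).1))

/-- The Left stop `L(G)`. -/
def Lstop (G : PGame.{u}) : ℚ := (stops G).1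

/-- The Right stop `R(G)`. -/
def Rstop (G : PGame.{u}) : ℚ := (stops G).2

/-- `G` is numberish: infinitesimally close to a number. -/
def Numberish (G : PGame.{u}) : Prop := Lstop G = Rstop G

/-- The data of temperature theory attached to a game: the walls `λ_t(G)`, `ρ_t(G)`
of the thermograph, the temperature `t(G)` (which is `⊥ = -∞` for integers), and the
cooled games `G_t`. -/
structure ThermoData : Type (u + 1) where
  lam : ℚ → ℚ
  rho : ℚ → ℚ
  temp : WithBot ℚ
  cool : ℚ → PGame.{u}

/-- The standard temperature-theory recursion. -/
def thermo : PGame.{u} → ThermoData.{u}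
  | PGame.mk α β L R =>
    if h : EqInt (PGame.mk α β L R) then
      { lam := fun _ => (h.choose : ℚ)
        rho := fun _ => (h.choose : ℚ)
        temp := ⊥
        cool := fun _ => dPGame (h.choose : ℚ) }
    else
      let lamT : ℚ → ℚ := fun t => qSup (Set.range fun i : α => (thermo (L i)).rho t - t)
      let rhoT : ℚ → ℚ := fun t => qInf (Set.range fun j : β => (thermo (R j)).lam t + t)
      let tG : ℚ :=
        if h2 : ∃ t, IsLeast {t : ℚ | IsDyadic t ∧ lamT t = rhoT t} t then h2.choose else 0
      { lam := fun t => if t ≤ tG then lamT t else lamT tG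
        rho := fun t => if t ≤ tG then rhoT t else lamT tG
        temp := (tG : WithBot ℚ)
        cool := fun t =>
          if t ≤ tG then
            PGame.mk α β (fun i => (thermo (L i)).cool t - dPGame t)
              (fun j => (thermo (R j)).cool t + dPGame t)
          else dPGame (lamT tG) }

/-- The wall `λ_t(G)`. -/
def lamW (G : PGame.{u}) (t : ℚ) : ℚ := (thermo G).lam t

/-- The wall `ρ_t(G)`. -/
def rhoW (G : PGame.{u}) (t : ℚ) : ℚ := (thermo G).rho t

/-- The temperature `t(G)`. -/
def temp (G : PGame.{u}) : WithBot ℚ := (thermo G).temp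

/-- The cooled game `G_t`. -/
def cool (G : PGame.{u}) (t : ℚ) : PGame.{u} := (thermo G).cool t

/-- `λ̃_t(G) = max_{G^L} (ρ_t(G^L) - t)`. -/
def lamTilde (G : PGame.{u}) (t : ℚ) : ℚ :=
  qSup (Set.range fun i => rhoW (G.moveLeft i) t - t)

/-- `ρ̃_t(G) = min_{G^R} (λ_t(G^R) + t)`. -/
def rhoTilde (G : PGame.{u}) (t : ℚ) : ℚ :=
  qInf (Set.range fun j => lamW (G.moveRight j) t + t)

/-- The formal game `G̃_t = {(G^L)_t - t | (G^R)_t + t}`. -/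
def tildeCool (G : PGame.{u}) (t : ℚ) : PGame.{u} :=
  PGame.mk G.LeftMoves G.RightMoves
    (fun i => cool (G.moveLeft i) t - dPGame t)
    (fun j => cool (G.moveRight j) t + dPGame t)

end Temper

namespace Temper

/-- A piecewise-linear function `ℚ → ℚ` with slopes in `A`, consisting of finitely many
segments (the first and last being half-lines) with dyadic breakpoints and intercepts. -/
def IsTrajWith (A : Set ℚ) (f : ℚ → ℚ) : Prop :=
  ∃ (n : ℕ) (j a b : ℕ → ℚ),
    (∀ i, i < n → j i ≤ j (i + 1)) ∧
    (∀ i, i ≤ n → IsDyadic (j i)) ∧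
    (∀ i, i ≤ n + 1 → a i ∈ A ∧ IsDyadic (b i)) ∧
    (∀ x, x ≤ j 0 → f x = a 0 * x + b 0) ∧
    (∀ i, i < n → ∀ x, j i ≤ x → x ≤ j (i + 1) → f x = a (i + 1) * x + b (i + 1)) ∧
    (∀ x, j n ≤ x → f x = a (n + 1) * x + b (n + 1))

/-- A dyadic trajectory: slopes in `{-1, 0, 1}`. -/
def IsDyadicTrajectory (f : ℚ → ℚ) : Prop := IsTrajWith {-1, 0, 1} f

/-- `f` has a mast with mast value `c`: it is eventually constant equal to `c`. -/
def HasMastValue (f : ℚ → ℚ) (c : ℚ) : Prop :=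
  ∃ x0 : ℚ, IsDyadic x0 ∧ ∀ x, x0 ≤ x → f x = c

end Temper

namespace TemperAux

open Temper SetTheory PGame

universe u

def ta_fintypeL {α β : Type u} {L : α → PGame.{u}} {R : β → PGame.{u}}
    (hs : (PGame.mk α β L R).Short) : Fintype α := by
  cases hs with
  | mk sL sR => exact inferInstance

def ta_fintypeR {α β : Type u} {L : α → PGame.{u}} {R : β → PGame.{u}}
    (hs : (PGame.mk α β L R).Short) : Fintype β := by
  cases hs with
  | mk sL sR => exact inferInstance

def ta_shortL {α β : Type u} {L : α → PGame.{u}} {R : β → PGame.{u}}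
    (hs : (PGame.mk α β L R).Short) (i : α) : (L i).Short := by
  cases hs with
  | mk sL sR => exact sL i

def ta_shortR {α β : Type u} {L : α → PGame.{u}} {R : β → PGame.{u}}
    (hs : (PGame.mk α β L R).Short) (j : β) : (R j).Short := by
  cases hs with
  | mk sL sR => exact sR j

def ta_shortML (G : PGame.{u}) (hs : G.Short) (i : G.LeftMoves) : (G.moveLeft i).Short := by
  cases G with
  | mk α β L R => exact ta_shortL hs i

theorem ta_add_zero (x : PGame.{u}) : x + 0 ≤ x ∧ x ≤ x + 0 := by
  induction x with
  | mk xl xr xL xR IHl IHr =>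
    refine ⟨(PGame.le_iff_moves _ _).2 ⟨?_, ?_⟩, (PGame.le_iff_moves _ _).2 ⟨?_, ?_⟩⟩
    · rintro (i | i)
      · intro h
        exact ((PGame.le_iff_moves _ _).1 (pg_le_refl (PGame.mk xl xr xL xR))).1 i
          (pg_le_trans h (IHl i).1)
      · exact i.elim
    · intro j h
      exact ((PGame.le_iff_moves _ _).1 h).2 (Sum.inl j) (IHr j).1
    · intro i h
      exact ((PGame.le_iff_moves _ _).1 h).1 (Sum.inl i) (IHl i).2
    · rintro (j | j)
      · intro h
        exact ((PGame.le_iff_moves _ _).1 (pg_le_refl (PGame.mk xl xr xL xR))).2 j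
          (pg_le_trans (IHr j).2 h)
      · exact j.elim

theorem ta_add_lm (x y : PGame.{u}) (P : PGame.{u} → Prop) (h1 : ∀ i, P (x.moveLeft i + y))
    (h2 : ∀ i, P (x + y.moveLeft i)) : ∀ i, P ((x + y).moveLeft i) := by
  cases x with
  | mk xl xr xL xR =>
    cases y with
    | mk yl yr yL yR =>
      rintro (i | i)
      · exact h1 i
      · exact h2 i

theorem ta_add_rm (x y : PGame.{u}) (hx : ∀ j : x.RightMoves, False)
    (hy : ∀ j : y.RightMoves, False) : ∀ j : (x + y).RightMoves, False := by
  cases x with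
  | mk xl xr xL xR =>
    cases y with
    | mk yl yr yL yR =>
      rintro (j | j)
      · exact hx j
      · exact hy j

theorem ta_neg_rm (x : PGame.{u}) (P : PGame.{u} → Prop) (h : ∀ i, P (-(x.moveLeft i))) :
    ∀ j, P ((-x).moveRight j) := by
  cases x with
  | mk xl xr xL xR =>
    intro j
    exact h j

theorem ta_neg_rm_ex (x : PGame.{u}) (i : x.LeftMoves) :
    ∃ j : (-x).RightMoves, (-x).moveRight j = -(x.moveLeft i) := by
  cases x with
  | mk xl xr xL xR => exact ⟨i, rfl⟩

theorem ta_add_one_lm (x : PGame.{u}) : ∃ i : (x + 1).LeftMoves, x ≤ (x + 1).moveLeft i := by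
  cases x with
  | mk xl xr xL xR => exact ⟨Sum.inr PUnit.unit, (ta_add_zero (PGame.mk xl xr xL xR)).2⟩

theorem ta_zero_le_one : (0 : PGame.{u}) ≤ 1 :=
  (PGame.le_iff_moves _ _).2 ⟨fun i => PEmpty.elim i, fun j => PEmpty.elim j⟩

theorem ta_le_add_one (x : PGame.{u}) : x ≤ x + 1 :=
  pg_le_trans (ta_add_zero x).2 ((add_congr_left_aux x 0 1).1 ta_zero_le_one)

theorem ta_not_add_one_le (x : PGame.{u}) : ¬ x + 1 ≤ x := by
  intro h
  obtain ⟨i, hi⟩ := ta_add_one_lm x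
  exact ((PGame.le_iff_moves _ _).1 h).1 i hi

theorem ta_N_mono {k m : ℕ} (h : k ≤ m) : nsmulP k (1 : PGame.{u}) ≤ nsmulP m 1 := by
  obtain ⟨d, rfl⟩ := Nat.exists_eq_add_of_le h
  clear h
  induction d with
  | zero => exact pg_le_refl _
  | succ d ih =>
    rw [← Nat.add_assoc]
    exact pg_le_trans ih (ta_le_add_one (nsmulP (k + d) 1))

theorem ta_N_strict {k m : ℕ} (h : k < m) : ¬ nsmulP m (1 : PGame.{u}) ≤ nsmulP k 1 :=
  fun hc => ta_not_add_one_le (nsmulP k 1) (pg_le_trans (ta_N_mono (k := k + 1) h) hc)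

theorem ta_rm_empty (k : ℕ) : ∀ j : (nsmulP k (1 : PGame.{u})).RightMoves, False := by
  induction k with
  | zero => intro j; exact PEmpty.elim j
  | succ k ih => exact ta_add_rm (nsmulP k 1) 1 ih (fun j => PEmpty.elim j)

theorem ta_N_lm (k : ℕ) : ∀ i : (nsmulP (k + 1) (1 : PGame.{u})).LeftMoves,
    (nsmulP (k + 1) 1).moveLeft i ≤ nsmulP k 1 := by
  induction k with
  | zero =>
    exact ta_add_lm (nsmulP 0 1) 1 (fun g => g ≤ nsmulP 0 1) (fun i => PEmpty.elim i)
      (fun _ => (ta_add_zero (nsmulP 0 1)).1)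
  | succ k ih =>
    exact ta_add_lm (nsmulP (k + 1) 1) 1 (fun g => g ≤ nsmulP (k + 1) 1)
      (fun i => (add_congr_right_aux 1 _ _).1 (ih i))
      (fun _ => (ta_add_zero (nsmulP (k + 1) 1)).1)

theorem ta_negzero_le : -(nsmulP 0 (1 : PGame.{u})) ≤ nsmulP 0 1 :=
  (PGame.le_iff_moves _ _).2 ⟨fun i => PEmpty.elim i, fun j => PEmpty.elim j⟩

/-- A representative pregame of the integer `n`. -/
def tI : ℤ → PGame.{u}
  | Int.ofNat k => nsmulP k 1
  | Int.negSucc k => -(nsmulP (k + 1) 1)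

theorem ta_nsmul (k : ℕ) : nsmulRec k (1 : Game.{u}) = ⟦nsmulP k 1⟧ := by
  induction k with
  | zero => rfl
  | succ k ih =>
    show nsmulRec k (1 : Game.{u}) + 1 = ⟦nsmulP k 1 + 1⟧
    rw [ih]
    rfl

theorem ta_smul (n : ℤ) : n • (1 : Game.{u}) = ⟦tI n⟧ := by
  cases n with
  | ofNat k =>
    show nsmulRec k (1 : Game.{u}) = _
    exact ta_nsmul k
  | negSucc k =>
    show -(nsmulRec (k + 1) (1 : Game.{u})) = _
    rw [ta_nsmul]
    rfl

theorem ta_not_zero_le_neg (p : ℕ) : ¬ nsmulP 0 (1 : PGame.{u}) ≤ -(nsmulP (p + 1) 1) := by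
  intro h
  obtain ⟨i, hi⟩ := ta_add_one_lm (nsmulP p (1 : PGame.{u}))
  obtain ⟨j, hj⟩ := ta_neg_rm_ex (nsmulP (p + 1) (1 : PGame.{u})) i
  have h2 := ((PGame.le_iff_moves _ _).1 h).2 j
  rw [hj] at h2
  apply h2
  exact pg_le_trans ((PGame.neg_le_neg_aux _ _).1.1
    (pg_le_trans (ta_N_mono (Nat.zero_le p)) hi)) ta_negzero_le

theorem ta_I_le (a b : ℤ) (h : a ≤ b) : tI.{u} a ≤ tI b := by
  cases a with
  | ofNat k =>
    cases b with
    | ofNat m =>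
      simp only [Int.ofNat_eq_coe] at h
      exact ta_N_mono (by omega)
    | negSucc m =>
      exfalso
      simp only [Int.ofNat_eq_coe, Int.negSucc_eq] at h
      omega
  | negSucc k =>
    cases b with
    | ofNat m =>
      exact pg_le_trans ((PGame.neg_le_neg_aux (nsmulP 0 1) (nsmulP (k + 1) 1)).1.1
        (ta_N_mono (Nat.zero_le (k + 1)))) (pg_le_trans ta_negzero_le (ta_N_mono (Nat.zero_le m)))
    | negSucc m =>
      simp only [Int.negSucc_eq] at h
      exact (PGame.neg_le_neg_aux (nsmulP (m + 1) 1) (nsmulP (k + 1) 1)).1.1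
        (ta_N_mono (by omega))

theorem ta_I_not_le (a b : ℤ) (h : b < a) : ¬ tI.{u} a ≤ tI b := by
  cases a with
  | ofNat k =>
    cases b with
    | ofNat m =>
      simp only [Int.ofNat_eq_coe] at h
      exact ta_N_strict (by omega)
    | negSucc m =>
      exact fun hc => ta_not_zero_le_neg m (pg_le_trans (ta_N_mono (Nat.zero_le k)) hc)
  | negSucc k =>
    cases b with
    | ofNat m =>
      exfalso
      simp only [Int.ofNat_eq_coe, Int.negSucc_eq] at h
      omega
    | negSucc m =>
      simp only [Int.negSucc_eq] at h
      exact fun hc => ta_N_strict (show k + 1 < m + 1 by omega)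
        ((PGame.neg_le_neg_aux (nsmulP (m + 1) 1) (nsmulP (k + 1) 1)).1.2 hc)

theorem ta_I_le_negN (k : ℕ) : tI.{u} (-(k : ℤ)) ≤ -(nsmulP k (1 : PGame.{u})) := by
  cases k with
  | zero => exact (PGame.le_iff_moves _ _).2 ⟨fun i => PEmpty.elim i, fun j => PEmpty.elim j⟩
  | succ k => exact pg_le_refl _

theorem ta_I_rm (n : ℤ) (hn : n < 0) :
    ∀ j : (tI.{u} n).RightMoves, tI (n + 1) ≤ (tI n).moveRight j := by
  obtain ⟨k, rfl⟩ : ∃ k : ℕ, n = Int.negSucc k :=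
    ⟨(-n - 1).toNat, by rw [Int.negSucc_eq]; omega⟩
  have e : Int.negSucc k + 1 = -(k : ℤ) := by rw [Int.negSucc_eq]; ring
  rw [e]
  exact ta_neg_rm (nsmulP (k + 1) 1) (fun g => tI (-(k : ℤ)) ≤ g)
    (fun i => pg_le_trans (ta_I_le_negN k) ((PGame.neg_le_neg_aux _ _).1.1 (ta_N_lm k i)))

theorem ta_nat_le (H : PGame.{u}) (he : ∀ j : H.RightMoves, False) (hne : ¬ EqInt H) :
    ∀ k : ℕ, nsmulP k (1 : PGame.{u}) ≤ H := by
  intro k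
  induction k with
  | zero => exact (PGame.le_iff_moves _ _).2 ⟨fun i => PEmpty.elim i, fun j => (he j).elim⟩
  | succ k ih =>
    refine (PGame.le_iff_moves _ _).2 ⟨fun i hc => ?_, fun j => (he j).elim⟩
    have h1 : H ≤ nsmulP k 1 := pg_le_trans hc (ta_N_lm k i)
    apply hne
    refine ⟨(k : ℤ), ?_⟩
    rw [ta_smul]
    exact Quotient.sound (And.intro h1 ih : PGame.Equiv H (tI (k : ℤ)))

theorem ta_bound : ∀ H : PGame.{u}, H.Short → ∃ N : ℕ, H ≤ nsmulP N 1 := by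
  intro H
  induction H with
  | mk α β L R ihL ihR =>
    intro hs
    haveI : Fintype α := ta_fintypeL hs
    choose f hf using fun i => ihL i (ta_shortL hs i)
    refine ⟨Finset.univ.sup f + 1,
      (PGame.le_iff_moves _ _).2 ⟨fun (i : α) h => ?_, fun j => (ta_rm_empty _ j).elim⟩⟩
    exact ta_N_strict (Nat.lt_succ_of_le (Finset.le_sup (f := f) (Finset.mem_univ i)))
      (pg_le_trans h (hf i))

lemma exists_isGreatest_range {ι : Type*} [Fintype ι] [Nonempty ι] (g : ι → ℤ) :
    ∃ a, IsGreatest (Set.range g) a := by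
  obtain ⟨i0, -, hi0⟩ := Finset.exists_max_image Finset.univ g ⟨Classical.arbitrary ι,
    Finset.mem_univ _⟩
  exact ⟨g i0, Set.mem_range_self i0, by rintro _ ⟨i, rfl⟩; exact hi0 i (Finset.mem_univ i)⟩

lemma exists_isLeast_range {ι : Type*} [Fintype ι] [Nonempty ι] (g : ι → ℤ) :
    ∃ a, IsLeast (Set.range g) a := by
  obtain ⟨i0, -, hi0⟩ := Finset.exists_min_image Finset.univ g ⟨Classical.arbitrary ι,
    Finset.mem_univ _⟩
  exact ⟨g i0, Set.mem_range_self i0, by rintro _ ⟨i, rfl⟩; exact hi0 i (Finset.mem_univ i)⟩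

lemma isGreatest_zSup {s : Set ℤ} (h : ∃ a, IsGreatest s a) : IsGreatest s (zSup s) := by
  unfold zSup
  rw [dif_pos h]
  exact h.choose_spec

lemma isLeast_zInf {s : Set ℤ} (h : ∃ a, IsLeast s a) : IsLeast s (zInf s) := by
  unfold zInf
  rw [dif_pos h]
  exact h.choose_spec

/-- The key simultaneous induction: if `n ≤ G` then `n ≤ ρ̄(G)`, and if `G ≰ n`
then `n + 1 ≤ λ̄(G)`. -/
theorem main : ∀ (H : PGame.{u}), H.Short →
    (∀ n : ℤ, tI n ≤ H → n ≤ rBar H) ∧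
    (∀ n : ℤ, ¬ H ≤ tI n → n + 1 ≤ lBar H) := by
  intro H
  induction H with
  | mk α β L R ihL ihR =>
    intro hs
    haveI : Fintype α := ta_fintypeL hs
    haveI : Fintype β := ta_fintypeR hs
    by_cases hEq : EqInt (PGame.mk α β L R)
    · -- integer case
      have hlr : lrBar (PGame.mk α β L R) = (hEq.choose, hEq.choose) := by
        rw [lrBar, dif_pos hEq]
      have hspec : (⟦PGame.mk α β L R⟧ : Game) = hEq.choose • (1 : Game) := hEq.choose_spec
      rw [ta_smul] at hspec
      have he : PGame.mk α β L R ≤ tI hEq.choose ∧ tI hEq.choose ≤ PGame.mk α β L R :=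
        Quotient.exact hspec
      have h2 : (lrBar (PGame.mk α β L R)).2 = hEq.choose := by rw [hlr]
      have h1 : (lrBar (PGame.mk α β L R)).1 = hEq.choose := by rw [hlr]
      constructor
      · intro n hn
        show n ≤ (lrBar (PGame.mk α β L R)).2
        rw [h2]
        by_contra hc
        push_neg at hc
        exact ta_I_not_le _ _ hc (pg_le_trans hn he.1)
      · intro n hn
        show n + 1 ≤ (lrBar (PGame.mk α β L R)).1
        rw [h1]
        by_contra hc
        push_neg at hc
        exact hn (pg_le_trans he.1 (ta_I_le _ _ (by omega)))
    · -- non-integer case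
      have hlr : lrBar (PGame.mk α β L R) =
          (zSup (Set.range fun i : α => (lrBar (L i)).2 + 1),
           zInf (Set.range fun j : β => (lrBar (R j)).1 - 1)) := by
        rw [lrBar, dif_neg hEq]
      obtain ⟨N₀, hN₀⟩ := ta_bound (PGame.mk α β L R) hs
      have hA : ∀ n : ℤ, tI n ≤ PGame.mk α β L R → n ≤ rBar (PGame.mk α β L R) := by
        intro n hn
        haveI hβ : Nonempty β := by
          by_contra hβ
          rw [not_nonempty_iff] at hβ
          have hle := ta_nat_le (PGame.mk α β L R) (fun j => hβ.elim j) hEq (N₀ + 1)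
          exact ta_N_strict (Nat.lt_succ_self N₀) (pg_le_trans hle hN₀)
        have hex : ∃ a, IsLeast (Set.range fun j : β => (lrBar (R j)).1 - 1) a :=
          exists_isLeast_range _
        have hgl := isLeast_zInf hex
        show n ≤ (lrBar (PGame.mk α β L R)).2
        rw [hlr]
        show n ≤ zInf (Set.range fun j : β => (lrBar (R j)).1 - 1)
        obtain ⟨j, hj⟩ := hgl.1
        rw [← hj]
        have hlf : ¬ R j ≤ tI n := ((PGame.le_iff_moves _ _).1 hn).2 j
        have hb := ((ihR j) (ta_shortR hs j)).2 n hlf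
        show n ≤ (lrBar (R j)).1 - 1
        have hb' : n + 1 ≤ (lrBar (R j)).1 := hb
        omega
      refine ⟨hA, ?_⟩
      have step : ∀ n : ℤ, ¬ PGame.mk α β L R ≤ tI n →
          n + 1 ≤ lBar (PGame.mk α β L R) ∨ (n < 0 ∧ ¬ PGame.mk α β L R ≤ tI (n + 1)) := by
        intro n hn
        rw [PGame.le_iff_moves] at hn
        simp only [not_and_or, not_forall, not_not] at hn
        rcases hn with ⟨i, hi⟩ | ⟨j, hj⟩
        · left
          have hri : n ≤ rBar (L i) := ((ihL i) (ta_shortL hs i)).1 n hi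
          have hri' : n ≤ (lrBar (L i)).2 := hri
          haveI : Nonempty α := ⟨i⟩
          have hex : ∃ a, IsGreatest (Set.range fun i : α => (lrBar (L i)).2 + 1) a :=
            exists_isGreatest_range _
          have hgg := isGreatest_zSup hex
          have hmem : (lrBar (L i)).2 + 1 ∈
              Set.range fun i : α => (lrBar (L i)).2 + 1 := Set.mem_range_self i
          have hle := hgg.2 hmem
          show n + 1 ≤ (lrBar (PGame.mk α β L R)).1
          rw [hlr]
          show n + 1 ≤ zSup (Set.range fun i : α => (lrBar (L i)).2 + 1)
          omega
        · right
          by_cases hn0 : 0 ≤ n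
          · exfalso
            obtain ⟨k, rfl⟩ : ∃ k : ℕ, n = (k : ℤ) := ⟨n.toNat, by omega⟩
            exact ta_rm_empty k j
          · push_neg at hn0
            refine ⟨hn0, fun hc => hEq ⟨n + 1, ?_⟩⟩
            rw [ta_smul]
            exact Quotient.sound
              (And.intro hc (pg_le_trans (ta_I_rm n hn0 j) hj) : PGame.Equiv _ _)
      have key : ∀ k : ℕ, ∀ n : ℤ, -(k : ℤ) ≤ n → ¬ PGame.mk α β L R ≤ tI n →
          n + 1 ≤ lBar (PGame.mk α β L R) := by
        intro k
        induction k with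
        | zero =>
          intro n hk hn
          rcases step n hn with h | ⟨h1, _⟩
          · exact h
          · omega
        | succ k ihk =>
          intro n hk hn
          rcases step n hn with h | ⟨h1, h2⟩
          · exact h
          · have := ihk (n + 1) (by omega) h2
            omega
      intro n hn
      exact key (-n).toNat n (by omega) hn

end TemperAux

open Temper in
/-- If `G` is short, not equal to an integer, and `λ̄(G) ≤ n`, then every
Left option satisfies `G^L ⧏ n`. -/
theorem leftOption_lf_of_lBar_le (G : PGame) [G.Short] (hG : ¬ EqInt G)
    (n : ℤ) (hn : lBar G ≤ n) (i : G.LeftMoves) :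
    ¬ ((n • (1 : Game)) ≤ (⟦G.moveLeft i⟧ : Game)) := by
  intro h
  rw [TemperAux.ta_smul] at h
  have hri : n ≤ rBar (G.moveLeft i) :=
    (TemperAux.main (G.moveLeft i) (TemperAux.ta_shortML G inferInstance i)).1 n h
  obtain ⟨α, β, L, R⟩ := G
  rename_i hs
  haveI : Fintype α := TemperAux.ta_fintypeL hs
  have hlr : lrBar (PGame.mk α β L R) =
      (zSup (Set.range fun i : α => (lrBar (L i)).2 + 1),
       zInf (Set.range fun j : β => (lrBar (R j)).1 - 1)) := by
    rw [lrBar, dif_neg hG]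
  haveI : Nonempty α := ⟨i⟩
  have hex : ∃ a, IsGreatest (Set.range fun i : α => (lrBar (L i)).2 + 1) a :=
    TemperAux.exists_isGreatest_range _
  have hgg := TemperAux.isGreatest_zSup hex
  have hmem : (lrBar (L i)).2 + 1 ∈ Set.range fun i : α => (lrBar (L i)).2 + 1 :=
    Set.mem_range_self i
  have hle := hgg.2 hmem
  have h1 : n ≤ (lrBar (L i)).2 := hri
  have h2 : lBar (PGame.mk α β L R) = zSup (Set.range fun i : α => (lrBar (L i)).2 + 1) := by
    show (lrBar (PGame.mk α β L R)).1 = _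
    rw [hlr]
  rw [h2] at hn
  omega
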